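/- arXiv:2003.05038 — 5 statements merged into one kernel-verified Lean document; each statement's English description precedes it below -/
import Mathlib

section
/- Let H_#(x) have tail \(\overline{H_\#}(x) = c_1 x^{β}(\log x)^{ξ}\exp(-λ(\log x)^{γ})\) for x > x_0, with γ > 1, λ, c_1 > 0, β, ξ ∈ ℝ. If G = (1/(1−H_#))^← and ζ(x) = x (log x) G'(x)/G(x), then ζ(x) ~ γ^{−1} λ^{−1/γ} (log x)^{1/γ} as x → ∞. -/
/-!
Write `u = log G(x)`. Taking logarithms in `H̄#(G x) = x⁻¹` gives `log x = Φ(u)` with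
`Φ(u) = λ u^γ - log c₁ - β u - ξ log u`, and differentiating this identity gives
`ζ(x) = log x / Φ'(u)`. Since `γ > 1`, `Φ(u) ~ λ u^γ` and `Φ'(u) ~ λγ u^(γ-1)`, hence
`ζ(x) / (log x)^(1/γ) = (log x / u^γ)^(1 - 1/γ) / (Φ'(u) / u^(γ-1)) → λ^(1-1/γ) / (λγ)`.
-/

open Filter Real Topology

theorem Filter.Eventually.eventually_nhds_of_atTop {α : Type*} [LinearOrder α]
    [TopologicalSpace α] [OrderTopology α] [NoMaxOrder α] [Nonempty α] {p : α → Prop}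
    (h : ∀ᶠ x in atTop, p x) : ∀ᶠ x in atTop, ∀ᶠ y in 𝓝 x, p y := by
  obtain ⟨a, ha⟩ := eventually_atTop.1 h
  filter_upwards [eventually_gt_atTop a] with x hx
  filter_upwards [eventually_gt_nhds hx] with y hy using ha y hy.le

theorem HasDerivAt.div_mul_mul_log_eq_log_div {Φ G : ℝ → ℝ} {d g x : ℝ}
    (hG : HasDerivAt G g x) (hΦ : HasDerivAt Φ d (Real.log (G x))) (hGx : G x ≠ 0)
    (hx : x ≠ 0) (h : ∀ᶠ y in 𝓝 x, Real.log y = Φ (Real.log (G y))) :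
    g / G x * (x * Real.log x) = Real.log x / d := by
  have hd : d * (g / G x) = x⁻¹ :=
    ((hΦ.comp x (hG.log hGx)).congr_of_eventuallyEq h).unique (hasDerivAt_log hx)
  have hd₀ : d ≠ 0 := left_ne_zero_of_mul (hd ▸ inv_ne_zero hx)
  rw [eq_div_iff hd₀, mul_comm, ← mul_assoc, hd, ← mul_assoc, inv_mul_cancel₀ hx, one_mul]

namespace LognormalTail

variable (c₁ lam γ β ξ : ℝ)

noncomputable def exponent (u : ℝ) : ℝ := lam * u ^ γ - log c₁ - β * u - ξ * log u

noncomputable def exponentDeriv (u : ℝ) : ℝ := lam * γ * u ^ (γ - 1) - β - ξ / u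

variable {c₁ lam γ β ξ}

theorem log_tail_eq_neg_exponent (hc₁ : 0 < c₁) {y : ℝ} (hy : 1 < y) :
    log (c₁ * y ^ β * (log y) ^ ξ * exp (-lam * (log y) ^ γ)) =
      -exponent c₁ lam γ β ξ (log y) := by
  have hy₀ : 0 < y := by linarith
  have hlog : 0 < log y := log_pos hy
  rw [log_mul (by positivity) (exp_ne_zero _), log_mul (by positivity) (by positivity),
    log_mul hc₁.ne' (by positivity), log_rpow hy₀, log_rpow hlog, log_exp, exponent]
  ring

theorem hasDerivAt_exponent {u : ℝ} (hu : 0 < u) :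
    HasDerivAt (exponent c₁ lam γ β ξ) (exponentDeriv lam γ β ξ u) u := by
  have h : HasDerivAt (fun v => lam * v ^ γ - log c₁ - β * v - ξ * log v)
      (lam * (γ * u ^ (γ - 1)) - β * 1 - ξ * u⁻¹) u :=
    ((((hasDerivAt_rpow_const (Or.inl hu.ne')).const_mul lam).sub_const (log c₁)).sub
      ((hasDerivAt_id' u).const_mul β)).sub ((hasDerivAt_log hu.ne').const_mul ξ)
  exact h.congr_deriv (by rw [exponentDeriv]; ring)

theorem tendsto_exponent_div_rpow (hγ : 1 < γ) :
    Tendsto (fun u => exponent c₁ lam γ β ξ u / u ^ γ) atTop (𝓝 lam) := by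
  have hγ₀ : 0 < γ := by linarith
  have hconst : Tendsto (fun u : ℝ => log c₁ / u ^ γ) atTop (𝓝 0) :=
    tendsto_const_nhds.div_atTop (tendsto_rpow_atTop hγ₀)
  have hlin : Tendsto (fun u : ℝ => u / u ^ γ) atTop (𝓝 0) := by
    refine (tendsto_rpow_neg_atTop (by linarith : 0 < γ - 1)).congr' ?_
    filter_upwards [eventually_gt_atTop 0] with u hu
    rw [neg_sub, rpow_sub hu, rpow_one]
  have hlog : Tendsto (fun u => log u / u ^ γ) atTop (𝓝 0) :=
    (isLittleO_log_rpow_atTop hγ₀).tendsto_div_nhds_zero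
  have h := ((tendsto_const_nhds (x := lam)).sub hconst).sub
    ((hlin.const_mul β).add (hlog.const_mul ξ))
  rw [mul_zero, mul_zero, add_zero, sub_zero, sub_zero] at h
  refine h.congr' ?_
  filter_upwards [eventually_gt_atTop 0] with u hu
  have : u ^ γ ≠ 0 := (rpow_pos_of_pos hu γ).ne'
  simp only [exponent]
  field_simp
  ring

theorem tendsto_exponentDeriv_div_rpow (hγ : 1 < γ) :
    Tendsto (fun u => exponentDeriv lam γ β ξ u / u ^ (γ - 1)) atTop (𝓝 (lam * γ)) := by
  have hγ₁ : 0 < γ - 1 := by linarith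
  have hconst : Tendsto (fun u : ℝ => β / u ^ (γ - 1)) atTop (𝓝 0) :=
    tendsto_const_nhds.div_atTop (tendsto_rpow_atTop hγ₁)
  have hinv : Tendsto (fun u : ℝ => ξ / u / u ^ (γ - 1)) atTop (𝓝 0) :=
    (tendsto_const_nhds.div_atTop tendsto_id).div_atTop (tendsto_rpow_atTop hγ₁)
  have h := ((tendsto_const_nhds (x := lam * γ)).sub hconst).sub hinv
  rw [sub_zero, sub_zero] at h
  refine h.congr' ?_
  filter_upwards [eventually_gt_atTop 0] with u hu
  have : u ^ (γ - 1) ≠ 0 := (rpow_pos_of_pos hu _).ne'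
  simp only [exponentDeriv]
  field_simp

end LognormalTail

theorem div_mul_rpow_one_div_eq {γ v u d : ℝ} (hγ : γ ≠ 0) (hv : 0 < v) (hu : 0 < u) :
    v / (d * v ^ (1 / γ)) = (v / u ^ γ) ^ (1 - 1 / γ) / (d / u ^ (γ - 1)) := by
  have hpow : (u ^ γ) ^ (1 - 1 / γ) = u ^ (γ - 1) := by
    rw [← rpow_mul hu.le]; congr 1; field_simp
  rw [div_rpow hv.le (rpow_nonneg hu.le _), hpow, rpow_sub hv, rpow_one]
  have : u ^ (γ - 1) ≠ 0 := (rpow_pos_of_pos hu _).ne'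
  have : v ^ (1 / γ) ≠ 0 := (rpow_pos_of_pos hv _).ne'
  field_simp

open LognormalTail in
theorem stmt5_general (Hbar G g ζ : ℝ → ℝ) (c₁ lam γ β ξ x₀ : ℝ)
    (hγ : 1 < γ) (hlam : 0 < lam) (hc₁ : 0 < c₁)
    (hHbar : ∀ x > x₀, Hbar x =
      c₁ * x ^ β * (Real.log x) ^ ξ * Real.exp (-lam * (Real.log x) ^ γ))
    (hGtop : Tendsto G atTop atTop)
    (hGderiv : ∀ᶠ x in atTop, HasDerivAt G (g x) x)
    (hGinv : ∀ᶠ x in atTop, Hbar (G x) = x⁻¹)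
    (hζ : ∀ x, ζ x = g x / G x * (x * Real.log x)) :
    Tendsto (fun x => ζ x / (Real.log x) ^ (1 / γ)) atTop
      (nhds (γ⁻¹ * lam ^ (-(1 / γ)))) := by
  have hGbig : ∀ᶠ x in atTop, max x₀ 1 < G x := hGtop.eventually_gt_atTop _
  have hlog : ∀ᶠ x in atTop, log x = exponent c₁ lam γ β ξ (log (G x)) := by
    filter_upwards [hGinv, hGbig] with x hinv hG
    rw [← neg_neg (log x), ← log_inv, ← hinv, hHbar _ ((le_max_left _ _).trans_lt hG),
      log_tail_eq_neg_exponent hc₁ ((le_max_right _ _).trans_lt hG), neg_neg]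
  have hu : Tendsto (fun x => log (G x)) atTop atTop := tendsto_log_atTop.comp hGtop
  have hexp : Tendsto (fun x => log x / log (G x) ^ γ) atTop (𝓝 lam) :=
    ((tendsto_exponent_div_rpow (c₁ := c₁) (β := β) (ξ := ξ) hγ).comp hu).congr'
      (hlog.mono fun x hx => by rw [Function.comp_apply, ← hx])
  have hderiv : Tendsto (fun x => exponentDeriv lam γ β ξ (log (G x)) / log (G x) ^ (γ - 1))
      atTop (𝓝 (lam * γ)) := (tendsto_exponentDeriv_div_rpow hγ).comp hu
  have hlim := (hexp.rpow_const (p := 1 - 1 / γ) (Or.inl hlam.ne')).div hderiv (by positivity)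
  rw [show lam ^ (1 - 1 / γ) / (lam * γ) = γ⁻¹ * lam ^ (-(1 / γ)) by
    rw [rpow_sub hlam, rpow_one, rpow_neg hlam.le]; field_simp] at hlim
  refine hlim.congr' ?_
  filter_upwards [hlog.eventually_nhds_of_atTop, hGderiv, hGbig, eventually_gt_atTop 1]
    with x hlogx hGd hG hx
  have hG₁ : 1 < G x := (le_max_right _ _).trans_lt hG
  rw [Pi.div_apply, hζ, hGd.div_mul_mul_log_eq_log_div (hasDerivAt_exponent (log_pos hG₁))
    (by positivity) (by positivity) hlogx, div_div,
    div_mul_rpow_one_div_eq (by positivity) (log_pos hx) (log_pos hG₁)]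

/-- For lognormal-type tails
`H̄#(x) = c₁ x^β (log x)^ξ exp (-λ (log x)^γ)` (`γ > 1`, `λ, c₁ > 0`),
if `G = (1/(1-H#))^←` (so `H̄#(G x) = x⁻¹` for large `x`) and
`ζ x = x log x · G'(x)/G(x)`, then `ζ x ~ γ⁻¹ λ^{-1/γ} (log x)^{1/γ}` as `x → ∞`. -/
theorem stmt5 (Hbar G g ζ : ℝ → ℝ) (c₁ lam γ β ξ x₀ : ℝ)
    (hγ : 1 < γ) (hlam : 0 < lam) (hc₁ : 0 < c₁)
    (hHbar : ∀ x > x₀, Hbar x =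
      c₁ * x ^ β * (Real.log x) ^ ξ * Real.exp (-lam * (Real.log x) ^ γ))
    (hGtop : Tendsto G atTop atTop)
    (hGpos : ∀ᶠ x in atTop, 0 < G x)
    (hGderiv : ∀ᶠ x in atTop, HasDerivAt G (g x) x)
    (hGinv : ∀ᶠ x in atTop, Hbar (G x) = x⁻¹)
    (hζ : ∀ x, ζ x = g x / G x * (x * Real.log x)) :
    Tendsto (fun x => ζ x / (Real.log x) ^ (1 / γ)) atTop
      (nhds (γ⁻¹ * lam ^ (-(1 / γ)))) :=
  stmt5_general Hbar G g ζ c₁ lam γ β ξ x₀ hγ hlam hc₁ hHbar hGtop hGderiv hGinv hζ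
end

section
/- Let H_#(x) have tail \(\overline{H_\#}(x) = c_1 x^{β}(\log x)^{ξ}\exp(λ(\log x)^{γ})\exp(-ρ\exp(μ(\log x)^{α}))\) for x > x_0, with 0 < α < 1, c_1, μ, ρ > 0, and β, ξ, λ, γ ∈ ℝ. If G = (1/(1−H_#))^← and ζ(x) = x (log x) G'(x)/G(x), then ζ(x) ~ α^{−1} μ^{−1/α} (log log x)^{(1−α)/α} as x → ∞. -/
/-!
Put `L = log G(x)` and `T = logTail`. The relation `H̄#(G(x)) = 1/x` says `log x = -T(L)`,
and differentiating it gives `ζ = T(L) / T'(L)` exactly.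
Both `T` and `T'` are dominated by their double-exponential term: `T(t) ~ -ρ e^{μ t^α}` and
`T'(t) ~ -ρ μ α t^{α-1} e^{μ t^α}`, so `ζ ~ L^{1-α} / (μ α)`. Taking logarithms in
`log x ~ ρ e^{μ L^α}` gives `log log x ~ μ L^α`, and eliminating `L` yields the claim.
-/

open Filter Real Asymptotics Topology

theorem isLittleO_rpow_exp_mul_rpow_atTop (k : ℝ) {μ α : ℝ} (hμ : 0 < μ) (hα : 0 < α) :
    (fun t : ℝ => t ^ k) =o[atTop] fun t => exp (μ * t ^ α) := by
  refine ((isLittleO_rpow_exp_pos_mul_atTop (k / α) hμ).comp_tendsto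
    (tendsto_rpow_atTop hα)).congr' ?_ EventuallyEq.rfl
  filter_upwards [eventually_gt_atTop 0] with t ht
  rw [Function.comp_apply, ← rpow_mul ht.le, mul_div_cancel₀ k hα.ne']

theorem tendsto_div_of_add_const_mul_isLittleO {ι : Type*} {l : Filter ι} {f E : ι → ℝ} {c : ℝ}
    (h : (fun t => f t + c * E t) =o[l] E) (hE : ∀ t, E t ≠ 0) :
    Tendsto (fun t => f t / E t) l (𝓝 (-c)) := by
  rw [← zero_sub]
  refine (h.tendsto_div_nhds_zero.sub_const c).congr fun t => ?_
  rw [add_div, mul_div_cancel_right₀ c (hE t), add_sub_cancel_right]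

theorem tendsto_div_of_tendsto_sub_of_tendsto_atTop {ι : Type*} {l : Filter ι} {u v : ι → ℝ}
    {c : ℝ} (hsub : Tendsto (fun t => u t - v t) l (𝓝 c)) (hu : Tendsto u l atTop) :
    Tendsto (fun t => v t / u t) l (𝓝 1) := by
  have h := (tendsto_const_nhds (x := (1 : ℝ))).sub (hsub.div_atTop hu)
  rw [sub_zero] at h
  refine h.congr' ?_
  filter_upwards [hu.eventually_ne_atTop 0] with t ht
  field_simp
  ring

theorem eventually_mul_eq_of_comp_eventuallyEq {f G h f' g h' : ℝ → ℝ}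
    (hcomp : ∀ᶠ t in atTop, f (G t) = h t)
    (hf : ∀ᶠ x in atTop, HasDerivAt f (f' x) (G x))
    (hG : ∀ᶠ x in atTop, HasDerivAt G (g x) x)
    (hh : ∀ᶠ x in atTop, HasDerivAt h (h' x) x) :
    ∀ᶠ x in atTop, f' x * g x = h' x := by
  have hnhds : ∀ᶠ x in atTop, h =ᶠ[𝓝 x] f ∘ G := by
    obtain ⟨a, ha⟩ := eventually_atTop.1 hcomp
    filter_upwards [eventually_gt_atTop a] with x hx
    filter_upwards [Ioi_mem_nhds hx] with t ht using (ha t ht.le).symm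
  filter_upwards [hnhds, hf, hG, hh] with x hx hfx hGx hhx
  exact ((hfx.comp x hGx).congr_of_eventuallyEq hx).unique hhx

section LogTail

variable (c₁ β ξ lam γ ρ μ α : ℝ)

/-- `log H̄#(y)` in the variable `t = log y`. -/
noncomputable def logTail (t : ℝ) : ℝ :=
  log c₁ + β * t + ξ * log t + lam * t ^ γ - ρ * exp (μ * t ^ α)

noncomputable def logTailDeriv (t : ℝ) : ℝ :=
  β + ξ / t + lam * γ * t ^ (γ - 1) - ρ * μ * α * t ^ (α - 1) * exp (μ * t ^ α)

variable {μ α}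

theorem log_tail_eq_logTail (hc₁ : 0 < c₁) {y : ℝ} (hy : 1 < y) :
    log (c₁ * y ^ β * log y ^ ξ * exp (lam * log y ^ γ) * exp (-ρ * exp (μ * log y ^ α))) =
      logTail c₁ β ξ lam γ ρ μ α (log y) := by
  have hy0 : 0 < y := one_pos.trans hy
  have hly : 0 < log y := log_pos hy
  rw [log_mul (by positivity) (exp_ne_zero _), log_mul (by positivity) (exp_ne_zero _),
    log_mul (by positivity) (by positivity), log_mul hc₁.ne' (by positivity),
    log_exp, log_exp, log_rpow hy0, log_rpow hly, logTail]
  ring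

theorem hasDerivAt_logTail {t : ℝ} (ht : t ≠ 0) :
    HasDerivAt (logTail c₁ β ξ lam γ ρ μ α) (logTailDeriv β ξ lam γ ρ μ α t) t := by
  have hpow (p : ℝ) := hasDerivAt_rpow_const (p := p) (Or.inl ht)
  have h := ((((hasDerivAt_id t).const_mul β).const_add (log c₁)).add
    ((hasDerivAt_log ht).const_mul ξ)).add ((hpow γ).const_mul lam) |>.sub
    (((hpow α).const_mul μ).exp.const_mul ρ)
  refine h.congr_deriv ?_
  unfold logTailDeriv
  field_simp

theorem logTail_add_isLittleO (hμ : 0 < μ) (hα : 0 < α) :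
    (fun t => logTail c₁ β ξ lam γ ρ μ α t + ρ * exp (μ * t ^ α)) =o[atTop]
      fun t => exp (μ * t ^ α) := by
  have hE (k : ℝ) := isLittleO_rpow_exp_mul_rpow_atTop k hμ hα
  have hconst : (fun _ => log c₁) =o[atTop] fun t => exp (μ * t ^ α) :=
    (isBigO_const_one ℝ (log c₁) atTop).trans_isLittleO ((hE 0).congr_left fun t => rpow_zero t)
  have hid : (fun t => t) =o[atTop] fun t => exp (μ * t ^ α) :=
    (hE 1).congr_left fun t => rpow_one t
  have hlog : log =o[atTop] fun t => exp (μ * t ^ α) :=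
    (isLittleO_log_rpow_atTop one_pos).trans (hE 1)
  refine (((hconst.add (hid.const_mul_left β)).add (hlog.const_mul_left ξ)).add
    ((hE γ).const_mul_left lam)).congr_left fun t => ?_
  simp only [logTail]
  ring

theorem tendsto_logTail_div_exp (hμ : 0 < μ) (hα : 0 < α) :
    Tendsto (fun t => logTail c₁ β ξ lam γ ρ μ α t / exp (μ * t ^ α)) atTop (𝓝 (-ρ)) :=
  tendsto_div_of_add_const_mul_isLittleO (logTail_add_isLittleO c₁ β ξ lam γ ρ hμ hα)
    fun _ => exp_ne_zero _

theorem logTailDeriv_mul_rpow_add_isLittleO (hμ : 0 < μ) (hα : 0 < α) :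
    (fun t => logTailDeriv β ξ lam γ ρ μ α t * t ^ (1 - α) + ρ * μ * α * exp (μ * t ^ α))
      =o[atTop] fun t => exp (μ * t ^ α) := by
  have hE (k : ℝ) := isLittleO_rpow_exp_mul_rpow_atTop k hμ hα
  refine (((hE (1 - α)).const_mul_left β).add ((hE (-α)).const_mul_left ξ)).add
    ((hE (γ - α)).const_mul_left (lam * γ)) |>.congr' ?_ EventuallyEq.rfl
  filter_upwards [eventually_gt_atTop 0] with t ht
  have e1 : t ^ (γ - 1) * t ^ (1 - α) = t ^ (γ - α) := by rw [← rpow_add ht]; ring_nf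
  have e2 : t ^ (α - 1) * t ^ (1 - α) = 1 := by rw [← rpow_add ht]; simp
  have e3 : t ^ (1 - α) / t = t ^ (-α) := by rw [← rpow_sub_one ht.ne']; ring_nf
  simp only [logTailDeriv]
  linear_combination -ξ * e3 - lam * γ * e1 + ρ * μ * α * exp (μ * t ^ α) * e2

theorem tendsto_logTailDeriv_mul_rpow_div_exp (hμ : 0 < μ) (hα : 0 < α) :
    Tendsto (fun t => logTailDeriv β ξ lam γ ρ μ α t * t ^ (1 - α) / exp (μ * t ^ α)) atTop
      (𝓝 (-(ρ * μ * α))) :=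
  tendsto_div_of_add_const_mul_isLittleO (logTailDeriv_mul_rpow_add_isLittleO β ξ lam γ ρ hμ hα)
    fun _ => exp_ne_zero _

theorem eventually_logTailDeriv_ne_zero (hρ : 0 < ρ) (hμ : 0 < μ) (hα : 0 < α) :
    ∀ᶠ t in atTop, logTailDeriv β ξ lam γ ρ μ α t ≠ 0 := by
  filter_upwards [(tendsto_logTailDeriv_mul_rpow_div_exp β ξ lam γ ρ hμ hα).eventually_ne
    (neg_ne_zero.2 (by positivity))] with t ht h0
  rw [h0, zero_mul, zero_div] at ht
  exact ht rfl

theorem tendsto_logTail_div_logTailDeriv_mul_rpow (hρ : 0 < ρ) (hμ : 0 < μ) (hα : 0 < α) :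
    Tendsto (fun t => logTail c₁ β ξ lam γ ρ μ α t /
      (logTailDeriv β ξ lam γ ρ μ α t * t ^ (1 - α))) atTop (𝓝 (μ * α)⁻¹) := by
  have hlim : -ρ / -(ρ * μ * α) = (μ * α)⁻¹ := by field_simp
  rw [← hlim]
  refine Tendsto.congr (fun t => div_div_div_cancel_right₀ (exp_ne_zero (μ * t ^ α)) _ _) ?_
  exact (tendsto_logTail_div_exp c₁ β ξ lam γ ρ hμ hα).div
    (tendsto_logTailDeriv_mul_rpow_div_exp β ξ lam γ ρ hμ hα) (neg_ne_zero.2 (by positivity))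

theorem tendsto_log_neg_logTail_sub (hρ : 0 < ρ) (hμ : 0 < μ) (hα : 0 < α) :
    Tendsto (fun t => log (-logTail c₁ β ξ lam γ ρ μ α t) - μ * t ^ α) atTop (𝓝 (log ρ)) := by
  have h : Tendsto (fun t => -logTail c₁ β ξ lam γ ρ μ α t / exp (μ * t ^ α)) atTop (𝓝 ρ) := by
    simpa only [neg_div, neg_neg] using (tendsto_logTail_div_exp c₁ β ξ lam γ ρ hμ hα).neg
  refine ((continuousAt_log hρ.ne').tendsto.comp h).congr' ?_
  filter_upwards [h.eventually_ne hρ.ne'] with t ht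
  rw [Function.comp_apply, log_div (left_ne_zero_of_mul ht) (exp_ne_zero _), log_exp]

theorem tendsto_log_neg_logTail_atTop (hρ : 0 < ρ) (hμ : 0 < μ) (hα : 0 < α) :
    Tendsto (fun t => log (-logTail c₁ β ξ lam γ ρ μ α t)) atTop atTop :=
  ((tendsto_log_neg_logTail_sub c₁ β ξ lam γ ρ hρ hμ hα).add_atTop
    ((tendsto_rpow_atTop hα).const_mul_atTop hμ)).congr fun _ => sub_add_cancel _ _

theorem tendsto_rpow_div_log_neg_logTail (hρ : 0 < ρ) (hμ : 0 < μ) (hα : 0 < α) :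
    Tendsto (fun t => t ^ α / log (-logTail c₁ β ξ lam γ ρ μ α t)) atTop (𝓝 μ⁻¹) := by
  have h := (tendsto_div_of_tendsto_sub_of_tendsto_atTop
    (tendsto_log_neg_logTail_sub c₁ β ξ lam γ ρ hρ hμ hα)
    (tendsto_log_neg_logTail_atTop c₁ β ξ lam γ ρ hρ hμ hα)).const_mul μ⁻¹
  rw [mul_one] at h
  refine h.congr fun t => ?_
  rw [mul_div_assoc', inv_mul_cancel_left₀ hμ.ne']

theorem tendsto_logTail_div_logTailDeriv_div_log_neg_logTail_rpow (hρ : 0 < ρ) (hμ : 0 < μ)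
    (hα : 0 < α) :
    Tendsto (fun t => logTail c₁ β ξ lam γ ρ μ α t / logTailDeriv β ξ lam γ ρ μ α t /
      log (-logTail c₁ β ξ lam γ ρ μ α t) ^ ((1 - α) / α)) atTop (𝓝 (α⁻¹ * μ ^ (-(1 / α)))) := by
  have hlim : (μ * α)⁻¹ * μ⁻¹ ^ ((1 - α) / α) = α⁻¹ * μ ^ (-(1 / α)) := by
    have hexp : -(1 / α) = -1 + -((1 - α) / α) := by field_simp; ring
    rw [inv_rpow hμ.le, ← rpow_neg hμ.le, hexp, rpow_add hμ, rpow_neg_one, mul_inv]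
    ring
  rw [← hlim]
  refine ((tendsto_logTail_div_logTailDeriv_mul_rpow c₁ β ξ lam γ ρ hρ hμ hα).mul
    ((tendsto_rpow_div_log_neg_logTail c₁ β ξ lam γ ρ hρ hμ hα).rpow_const
      (Or.inl (inv_ne_zero hμ.ne')))).congr' ?_
  filter_upwards [eventually_gt_atTop 0,
    (tendsto_log_neg_logTail_atTop c₁ β ξ lam γ ρ hρ hμ hα).eventually_gt_atTop 0]
    with t ht hlog
  rw [div_rpow (by positivity) hlog.le, ← rpow_mul ht.le, mul_div_cancel₀ _ hα.ne']
  have : 0 < t ^ (1 - α) := by positivity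
  field_simp

end LogTail

theorem stmt6_general (Hbar G g ζ : ℝ → ℝ) (c₁ μ ρ α lam γ β ξ x₀ : ℝ)
    (hα1 : 0 < α) (hc₁ : 0 < c₁) (hμ : 0 < μ) (hρ : 0 < ρ)
    (hHbar : ∀ x > x₀, Hbar x =
      c₁ * x ^ β * (Real.log x) ^ ξ * Real.exp (lam * (Real.log x) ^ γ) *
        Real.exp (-ρ * Real.exp (μ * (Real.log x) ^ α)))
    (hGtop : Tendsto G atTop atTop)
    (hGderiv : ∀ᶠ x in atTop, HasDerivAt G (g x) x)
    (hGinv : ∀ᶠ x in atTop, Hbar (G x) = x⁻¹)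
    (hζ : ∀ x, ζ x = g x / G x * (x * Real.log x)) :
    Tendsto (fun x => ζ x / (Real.log (Real.log x)) ^ ((1 - α) / α)) atTop
      (nhds (α⁻¹ * μ ^ (-(1 / α)))) := by
  have hL : Tendsto (fun x => log (G x)) atTop atTop := tendsto_log_atTop.comp hGtop
  have hG1 : ∀ᶠ x in atTop, 1 < G x := hGtop.eventually_gt_atTop 1
  have hlog : ∀ᶠ x in atTop, logTail c₁ β ξ lam γ ρ μ α (log (G x)) = -log x := by
    filter_upwards [hGinv, hGtop.eventually_gt_atTop x₀, hG1] with x hinv hx₀ hx1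
    rw [← log_tail_eq_logTail c₁ β ξ lam γ ρ hc₁ hx1, ← hHbar _ hx₀, hinv, log_inv]
  have hderiv :
      ∀ᶠ x in atTop, logTailDeriv β ξ lam γ ρ μ α (log (G x)) * (G x)⁻¹ * g x = -x⁻¹ := by
    refine eventually_mul_eq_of_comp_eventuallyEq (f := logTail c₁ β ξ lam γ ρ μ α ∘ log)
      hlog ?_ hGderiv ?_
    · filter_upwards [hG1] with x hx1
      exact (hasDerivAt_logTail c₁ β ξ lam γ ρ (log_pos hx1).ne').comp (G x)
        (hasDerivAt_log (one_pos.trans hx1).ne')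
    · filter_upwards [eventually_gt_atTop 0] with x hx
      exact (hasDerivAt_log hx.ne').neg
  refine ((tendsto_logTail_div_logTailDeriv_div_log_neg_logTail_rpow c₁ β ξ lam γ ρ hρ hμ
    hα1).comp hL).congr' ?_
  filter_upwards [hlog, hderiv, hG1, eventually_gt_atTop 0,
    hL.eventually (eventually_logTailDeriv_ne_zero β ξ lam γ ρ hρ hμ hα1)]
    with x hT hT' hx1 hx hne
  rw [Function.comp_apply, hT, neg_neg, hζ]
  congr 1
  have hG0 : G x ≠ 0 := (one_pos.trans hx1).ne'
  field_simp at hT' ⊢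
  linear_combination -log x * hT'

/-- For super-lognormal-type tails
`H̄#(x) = c₁ x^β (log x)^ξ exp (λ (log x)^γ) exp (-ρ exp (μ (log x)^α))`
(`0 < α < 1`, `c₁, μ, ρ > 0`), if `G` satisfies `H̄#(G x) = x⁻¹` for large `x` and
`ζ x = x log x · G'(x)/G(x)`, then `ζ x ~ α⁻¹ μ^{-1/α} (log log x)^{(1-α)/α}`. -/
theorem stmt6 (Hbar G g ζ : ℝ → ℝ) (c₁ μ ρ α lam γ β ξ x₀ : ℝ)
    (hα1 : 0 < α) (hα2 : α < 1) (hc₁ : 0 < c₁) (hμ : 0 < μ) (hρ : 0 < ρ)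
    (hHbar : ∀ x > x₀, Hbar x =
      c₁ * x ^ β * (Real.log x) ^ ξ * Real.exp (lam * (Real.log x) ^ γ) *
        Real.exp (-ρ * Real.exp (μ * (Real.log x) ^ α)))
    (hGtop : Tendsto G atTop atTop)
    (hGpos : ∀ᶠ x in atTop, 0 < G x)
    (hGderiv : ∀ᶠ x in atTop, HasDerivAt G (g x) x)
    (hGinv : ∀ᶠ x in atTop, Hbar (G x) = x⁻¹)
    (hζ : ∀ x, ζ x = g x / G x * (x * Real.log x)) :
    Tendsto (fun x => ζ x / (Real.log (Real.log x)) ^ ((1 - α) / α)) atTop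
      (nhds (α⁻¹ * μ ^ (-(1 / α)))) :=
  stmt6_general Hbar G g ζ c₁ μ ρ α lam γ β ξ x₀ hα1 hc₁ hμ hρ hHbar hGtop hGderiv hGinv hζ
end

section
/- Let {S_n} be a random walk with i.i.d. ℕ_0-valued steps with step distribution F satisfying \overline{F}(n) = n^{−β}L(n) ∈ RV_{−β}, 0 < β < 1, started at 0, with range A = {S_n : n ≥ 0}. Then for every C > 0 there exists c > 0 such that for all n, P_0(#(A ∩ [0,n]) ≥ c n^β log n / L(n)) ≤ n^{−C}. -/
/-!
Every point of `A ∩ [0, n]` other than `0` is entered by a nonzero step, and no step taken before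
the last visit to `[0, n]` exceeds `n`. So if `#(A ∩ [0, n]) > m`, the first `m` nonzero steps all
lie in `[1, n]`. Conditioning on the first step, and using that the shifted walk has the law of the
walk, the probability `q m` of this event satisfies
`q (m + 1) = P(ξ = 0) q (m + 1) + P(1 ≤ ξ ≤ n) q m`, whence `q m ≤ (1 - t) ^ m ≤ exp (-t m)` with
`t = P(ξ > n) = n^{-β} L(n)`. At `m ≈ c log n / t` this is at most `n^{-C}` once `c ≥ C + 2`.
-/

open Filter MeasureTheory ProbabilityTheory

/-- A positive function slowly varying at infinity. -/
def SlowlyVarying (L : ℝ → ℝ) : Prop :=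
  (∀ᶠ x in Filter.atTop, 0 < L x) ∧
    ∀ c > (0:ℝ), Filter.Tendsto (fun x => L (c * x) / L x) Filter.atTop (nhds 1)

namespace NatWalk

def walk (x : ℕ → ℕ) (j : ℕ) : ℕ := ∑ k ∈ Finset.range j, x k

lemma walk_succ (x : ℕ → ℕ) (j : ℕ) : walk x (j + 1) = walk x j + x j :=
  Finset.sum_range_succ x j

lemma walk_mono (x : ℕ → ℕ) : Monotone (walk x) := fun _ _ h =>
  Finset.sum_le_sum_of_subset (Finset.range_subset_range.2 h)

def nonzeroCount (x : ℕ → ℕ) (j : ℕ) : ℕ := ((Finset.range j).filter (x · ≠ 0)).card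

lemma nonzeroCount_succ (x : ℕ → ℕ) (j : ℕ) :
    nonzeroCount x (j + 1) = nonzeroCount x j + if x j ≠ 0 then 1 else 0 := by
  simp only [nonzeroCount, Finset.card_filter, Finset.sum_range_succ]

lemma nonzeroCount_succ' (x : ℕ → ℕ) (j : ℕ) :
    nonzeroCount x (j + 1) = nonzeroCount (fun k => x (k + 1)) j + if x 0 ≠ 0 then 1 else 0 := by
  simp only [nonzeroCount, Finset.card_filter, Finset.sum_range_succ']

lemma card_image_walk_le (x : ℕ → ℕ) (j : ℕ) :
    ((Finset.range (j + 1)).image (walk x)).card ≤ nonzeroCount x j + 1 := by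
  induction j with
  | zero => simp [nonzeroCount]
  | succ j ih =>
    rw [Finset.range_add_one, Finset.image_insert, nonzeroCount_succ]
    by_cases hx : x j = 0
    · have hmem : walk x (j + 1) ∈ (Finset.range (j + 1)).image (walk x) :=
        Finset.mem_image.2 ⟨j, Finset.self_mem_range_succ j, by rw [walk_succ, hx, add_zero]⟩
      simpa [Finset.insert_eq_of_mem hmem, hx] using ih
    · simpa [hx] using (Finset.card_insert_le _ _).trans (Nat.succ_le_succ ih)

def HasShortPrefix (n m : ℕ) (x : ℕ → ℕ) : Prop :=
  ∃ j, (∀ k < j, x k ≤ n) ∧ m ≤ nonzeroCount x j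

lemma HasShortPrefix.mono {n m m' : ℕ} {x : ℕ → ℕ} (h : HasShortPrefix n m x) (hm : m' ≤ m) :
    HasShortPrefix n m' x :=
  let ⟨j, hshort, hcount⟩ := h
  ⟨j, hshort, hm.trans hcount⟩

lemma hasShortPrefix_of_lt_ncard {n m : ℕ} {x : ℕ → ℕ}
    (h : m < (Set.range (walk x) ∩ Set.Iic n).ncard) : HasShortPrefix n m x := by
  set A := Set.range (walk x) ∩ Set.Iic n
  have hfin : A.Finite := (Set.finite_Iic n).subset Set.inter_subset_right
  obtain ⟨_, ⟨⟨j, rfl⟩, hjn⟩, hmax⟩ :=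
    Set.exists_max_image A id hfin (Set.nonempty_of_ncard_ne_zero (by omega))
  have hsub : A ⊆ (Finset.range (j + 1)).image (walk x) := by
    rintro _ ⟨⟨i, rfl⟩, hin⟩
    rcases le_or_gt i j with hij | hji
    · exact Finset.mem_image.2 ⟨i, Finset.mem_range.2 (Nat.lt_succ_of_le hij), rfl⟩
    · have : walk x i = walk x j :=
        le_antisymm (hmax _ ⟨⟨i, rfl⟩, hin⟩) (walk_mono x hji.le)
      exact Finset.mem_image.2 ⟨j, Finset.self_mem_range_succ j, this.symm⟩
  refine ⟨j, fun k hk => ?_, ?_⟩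
  · calc x k ≤ walk x (k + 1) := walk_succ x k ▸ Nat.le_add_left _ _
      _ ≤ walk x j := walk_mono x hk
      _ ≤ n := hjn
  · have := (Set.ncard_le_ncard hsub (Finset.finite_toSet _)).trans_eq (Set.ncard_coe_finset _)
    have := card_image_walk_le x j
    omega

lemma hasShortPrefix_succ_iff {n m : ℕ} {x : ℕ → ℕ} :
    HasShortPrefix n (m + 1) x ↔
      (x 0 = 0 ∧ HasShortPrefix n (m + 1) (fun k => x (k + 1))) ∨
      (x 0 ≠ 0 ∧ x 0 ≤ n ∧ HasShortPrefix n m (fun k => x (k + 1))) := by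
  constructor
  · rintro ⟨_ | j, hshort, hcount⟩
    · simp [nonzeroCount] at hcount
    · have htail : ∀ k < j, x (k + 1) ≤ n := fun k hk => hshort (k + 1) (by omega)
      rw [nonzeroCount_succ'] at hcount
      by_cases hx : x 0 = 0
      · exact Or.inl ⟨hx, j, htail, by simpa [hx] using hcount⟩
      · exact Or.inr ⟨hx, hshort 0 (by omega), j, htail, by simp [hx] at hcount; omega⟩
  · rintro (⟨hx, j, htail, hcount⟩ | ⟨hx, hxn, j, htail, hcount⟩) <;>
      refine ⟨j + 1, fun k hk => ?_, ?_⟩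
    · cases k with
      | zero => simp [hx]
      | succ k => exact htail k (by omega)
    · rw [nonzeroCount_succ']; simpa [hx] using hcount
    · cases k with
      | zero => exact hxn
      | succ k => exact htail k (by omega)
    · rw [nonzeroCount_succ']; simpa [hx] using hcount

lemma measurable_nonzeroCount (j : ℕ) : Measurable fun x : ℕ → ℕ => nonzeroCount x j := by
  simp only [nonzeroCount, Finset.card_filter]
  exact Finset.measurable_sum _ fun k _ =>
    (measurable_of_countable fun y : ℕ => if y ≠ 0 then 1 else 0).comp (measurable_pi_apply k)

lemma measurableSet_hasShortPrefix (n m : ℕ) :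
    MeasurableSet {x : ℕ → ℕ | HasShortPrefix n m x} := by
  simp only [HasShortPrefix, Set.ofPred_exists, Set.ofPred_and, Set.ofPred_forall]
  exact .iUnion fun j => .inter (.iInter fun k => .iInter fun _ =>
      measurableSet_le (measurable_pi_apply k) measurable_const)
    (measurableSet_le measurable_const (measurable_nonzeroCount j))

section Probability

variable {Ω : Type*} [MeasurableSpace Ω] {P : Measure Ω} {ξ : ℕ → Ω → ℕ}

lemma indepFun_head_tail (hmeas : ∀ k, Measurable (ξ k)) (hindep : iIndepFun ξ P) :
    IndepFun (ξ 0) (fun ω k => ξ (k + 1) ω) P := by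
  have hdisj : Disjoint ({0} : Set ℕ) (Set.Ioi 0) := by simp
  have h := indep_iSup_of_disjoint (fun k => (hmeas k).comap_le) hindep.iIndep hdisj
  rw [IndepFun_iff_Indep]
  refine indep_of_indep_of_le h (le_iSup₂_of_le 0 rfl le_rfl) ?_
  rw [MeasurableSpace.pi, MeasurableSpace.comap_iSup]
  refine iSup_le fun k => ?_
  rw [MeasurableSpace.comap_comp]
  exact le_iSup₂_of_le (k + 1) (Nat.succ_pos k) le_rfl

lemma measureReal_lt_pos_of_eventually {X : Ω → ℕ} [IsFiniteMeasure P]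
    (h : ∀ᶠ N : ℕ in atTop, 0 < P.real {ω | N < X ω}) (n : ℕ) : 0 < P.real {ω | n < X ω} := by
  obtain ⟨N, hN, hnN⟩ := (h.and (eventually_ge_atTop n)).exists
  exact hN.trans_le (measureReal_mono fun ω (h : N < X ω) => hnN.trans_lt h)

lemma map_tail_eq_map (hmeas : ∀ k, Measurable (ξ k)) (hindep : iIndepFun ξ P)
    (hident : ∀ k, IdentDistrib (ξ k) (ξ 0) P P) :
    P.map (fun ω k => ξ (k + 1) ω) = P.map (fun ω k => ξ k ω) := by
  rw [(hindep.precomp Nat.succ_injective).map_fun_eq_infinitePi_map (fun k => hmeas _),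
    hindep.map_fun_eq_infinitePi_map hmeas]
  congr 1
  funext k
  rw [(hident (k + 1)).map_eq, (hident k).map_eq]

variable [IsProbabilityMeasure P]

lemma measureReal_hasShortPrefix_succ (hmeas : ∀ k, Measurable (ξ k)) (hindep : iIndepFun ξ P)
    (hident : ∀ k, IdentDistrib (ξ k) (ξ 0) P P) (n m : ℕ) :
    P.real {ω | HasShortPrefix n (m + 1) (fun k => ξ k ω)} =
      P.real {ω | ξ 0 ω = 0} * P.real {ω | HasShortPrefix n (m + 1) (fun k => ξ k ω)} +
      P.real {ω | ξ 0 ω ≠ 0 ∧ ξ 0 ω ≤ n} * P.real {ω | HasShortPrefix n m (fun k => ξ k ω)} := by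
  set tail : Ω → ℕ → ℕ := fun ω k => ξ (k + 1) ω
  have htail : Measurable tail := measurable_pi_lambda _ fun k => hmeas (k + 1)
  have hlaw : ∀ m, P.real (tail ⁻¹' {x | HasShortPrefix n m x}) =
      P.real {ω | HasShortPrefix n m (fun k => ξ k ω)} := fun m => by
    rw [← map_measureReal_apply htail (measurableSet_hasShortPrefix n m),
      map_tail_eq_map hmeas hindep hident,
      map_measureReal_apply (measurable_pi_lambda _ hmeas) (measurableSet_hasShortPrefix n m)]
    rfl
  have hsplit : {ω | HasShortPrefix n (m + 1) (fun k => ξ k ω)} =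
      (ξ 0 ⁻¹' {0} ∩ tail ⁻¹' {x | HasShortPrefix n (m + 1) x}) ∪
      (ξ 0 ⁻¹' {y | y ≠ 0 ∧ y ≤ n} ∩ tail ⁻¹' {x | HasShortPrefix n m x}) :=
    Set.ext fun ω => hasShortPrefix_succ_iff.trans (or_congr_right and_assoc.symm)
  have hmul : ∀ s t, MeasurableSet t →
      P.real (ξ 0 ⁻¹' s ∩ tail ⁻¹' t) = P.real (ξ 0 ⁻¹' s) * P.real (tail ⁻¹' t) :=
    fun s t ht => by
      simp only [measureReal_def, ← ENNReal.toReal_mul]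
      exact congrArg _
        ((indepFun_head_tail hmeas hindep).measure_inter_preimage_eq_mul s t .of_discrete ht)
  have hdisj : Disjoint (ξ 0 ⁻¹' {0} ∩ tail ⁻¹' {x | HasShortPrefix n (m + 1) x})
      (ξ 0 ⁻¹' {y | y ≠ 0 ∧ y ≤ n} ∩ tail ⁻¹' {x | HasShortPrefix n m x}) :=
    Set.disjoint_left.2 fun ω h₁ h₂ => h₂.1.1 h₁.1
  conv_lhs => rw [hsplit, measureReal_union hdisj
    (((hmeas 0) .of_discrete).inter (htail (measurableSet_hasShortPrefix n m)))]
  rw [hmul _ _ (measurableSet_hasShortPrefix n _), hmul _ _ (measurableSet_hasShortPrefix n _),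
    hlaw, hlaw]
  rfl

lemma measureReal_eq_zero_add_nonzero_le_add_lt {X : Ω → ℕ} (hX : Measurable X) (n : ℕ) :
    P.real {ω | X ω = 0} + P.real {ω | X ω ≠ 0 ∧ X ω ≤ n} + P.real {ω | n < X ω} = 1 := by
  have hd₀₁ : Disjoint {ω | X ω = 0} {ω | X ω ≠ 0 ∧ X ω ≤ n} :=
    Set.disjoint_left.2 fun ω h₀ h₁ => h₁.1 h₀
  have hd : Disjoint ({ω | X ω = 0} ∪ {ω | X ω ≠ 0 ∧ X ω ≤ n}) {ω | n < X ω} :=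
    Set.disjoint_left.2 fun ω h₀₁ (h₂ : n < X ω) => by
      rcases h₀₁ with (h : X ω = 0) | (h : X ω ≠ 0 ∧ X ω ≤ n) <;> omega
  have hunion : {ω | X ω = 0} ∪ {ω | X ω ≠ 0 ∧ X ω ≤ n} ∪ {ω | n < X ω} = Set.univ :=
    Set.eq_univ_of_forall fun ω => by
      simp only [Set.mem_union, Set.mem_ofPred_eq]
      omega
  rw [← measureReal_union hd₀₁ (hX (.of_discrete (s := {y | y ≠ 0 ∧ y ≤ n}))),
    ← measureReal_union hd (hX (.of_discrete (s := Set.Ioi n))), hunion, probReal_univ]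

lemma measureReal_hasShortPrefix_le (hmeas : ∀ k, Measurable (ξ k)) (hindep : iIndepFun ξ P)
    (hident : ∀ k, IdentDistrib (ξ k) (ξ 0) P P) (n m : ℕ) :
    P.real {ω | HasShortPrefix n m (fun k => ξ k ω)} ≤ (1 - P.real {ω | n < ξ 0 ω}) ^ m := by
  have hpartition := measureReal_eq_zero_add_nonzero_le_add_lt (P := P) (hmeas 0) n
  set a := P.real {ω | ξ 0 ω = 0}
  set b := P.real {ω | ξ 0 ω ≠ 0 ∧ ξ 0 ω ≤ n}
  set t := P.real {ω | n < ξ 0 ω}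
  induction m with
  | zero => simp
  | succ m ih =>
    set q' := P.real {ω | HasShortPrefix n (m + 1) (fun k => ξ k ω)}
    set q := P.real {ω | HasShortPrefix n m (fun k => ξ k ω)}
    have hrec : q' = a * q' + b * q := measureReal_hasShortPrefix_succ hmeas hindep hident n m
    have hanti : q' ≤ q := measureReal_mono fun ω h => HasShortPrefix.mono h m.le_succ
    have ha : 0 ≤ a := measureReal_nonneg
    have hb : 0 ≤ b := measureReal_nonneg
    calc q' ≤ (1 - t) * q := by
          rw [show 1 - t = a + b by linarith]
          linarith [mul_nonneg ha (sub_nonneg.2 hanti)]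
      _ ≤ (1 - t) * (1 - t) ^ m := mul_le_mul_of_nonneg_left ih (by linarith)
      _ = (1 - t) ^ (m + 1) := by ring

end Probability

lemma one_sub_pow_le_rpow_neg {t R C : ℝ} {n m : ℕ} (hn : 2 ≤ n) (ht₀ : 0 ≤ t) (ht₁ : t ≤ 1)
    (hRt : R * t = (C + 2) * Real.log n) (hm : R ≤ m + 1) : (1 - t) ^ m ≤ (n : ℝ) ^ (-C) := by
  have hlog : 1 / 2 < Real.log n := by
    have := Real.log_two_gt_d9
    have := Real.log_le_log two_pos (by exact_mod_cast hn : (2 : ℝ) ≤ n)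
    linarith
  have hmt : C * Real.log n ≤ m * t := by nlinarith
  calc (1 - t) ^ m ≤ Real.exp (-t) ^ m :=
        pow_le_pow_left₀ (by linarith) (Real.one_sub_le_exp_neg t) m
    _ = Real.exp (-(m * t)) := by rw [← Real.exp_nat_mul]; ring_nf
    _ ≤ Real.exp (Real.log n * -C) := Real.exp_le_exp.2 (by linarith)
    _ = (n : ℝ) ^ (-C) := (Real.rpow_def_of_pos (by positivity) _).symm

end NatWalk

theorem stmt12_general {Ω : Type*} [MeasurableSpace Ω] (P : Measure Ω) [IsProbabilityMeasure P]
    (β : ℝ)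
    (ξ : ℕ → Ω → ℕ) (Lf : ℝ → ℝ) (hL : SlowlyVarying Lf)
    (hmeas : ∀ k, Measurable (ξ k))
    (hindep : iIndepFun ξ P)
    (hident : ∀ k, IdentDistrib (ξ k) (ξ 0) P P)
    (htail : ∀ n : ℕ, 1 ≤ n →
      (P {ω | n < ξ 0 ω}).toReal = (n : ℝ) ^ (-β) * Lf n)
    (S : Ω → ℕ → ℕ) (hS : ∀ ω n, S ω n = ∑ k ∈ Finset.range n, ξ k ω) :
    ∀ C > (0:ℝ), ∃ c > (0:ℝ), ∀ n : ℕ, 1 ≤ n →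
      (P {ω | c * (n : ℝ) ^ β * Real.log n / Lf n ≤
          ((Set.range (S ω) ∩ Set.Iic n).ncard : ℝ)}).toReal ≤ (n : ℝ) ^ (-C) := by
  intro C hC
  refine ⟨C + 2, by linarith, fun n hn => ?_⟩
  rcases hn.eq_or_lt with rfl | hn₂
  · simp
  have ht : 0 < P.real {ω | n < ξ 0 ω} := by
    refine NatWalk.measureReal_lt_pos_of_eventually ?_ n
    filter_upwards [tendsto_natCast_atTop_atTop.eventually hL.1, eventually_ge_atTop 1]
      with N hLN hN
    rw [measureReal_def, htail N hN]
    positivity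
  have hLn : 0 < Lf n := by
    rw [measureReal_def, htail n hn] at ht
    exact pos_of_mul_pos_right ht (by positivity)
  set R := (C + 2) * (n : ℝ) ^ β * Real.log n / Lf n
  have hR : 0 < R := by
    have := Real.log_pos (by exact_mod_cast hn₂ : (1 : ℝ) < n)
    positivity
  have hRt : R * P.real {ω | n < ξ 0 ω} = (C + 2) * Real.log n := by
    rw [measureReal_def, htail n hn, Real.rpow_neg (by positivity)]
    simp only [R]
    field_simp
  obtain ⟨m, hm⟩ := Nat.exists_eq_add_one.2 (Nat.ceil_pos.2 hR)
  have hincl : {ω | R ≤ ((Set.range (S ω) ∩ Set.Iic n).ncard : ℝ)} ⊆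
      {ω | NatWalk.HasShortPrefix n m (fun k => ξ k ω)} := fun ω hω => by
    have hwalk : S ω = NatWalk.walk (fun k => ξ k ω) := funext (hS ω)
    have := Nat.ceil_le.2 (show R ≤ _ from hω)
    exact NatWalk.hasShortPrefix_of_lt_ncard (by rw [← hwalk]; omega)
  calc (P {ω | R ≤ ((Set.range (S ω) ∩ Set.Iic n).ncard : ℝ)}).toReal
      ≤ P.real {ω | NatWalk.HasShortPrefix n m (fun k => ξ k ω)} := measureReal_mono hincl
    _ ≤ (1 - P.real {ω | n < ξ 0 ω}) ^ m :=
      NatWalk.measureReal_hasShortPrefix_le hmeas hindep hident n m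
    _ ≤ (n : ℝ) ^ (-C) := NatWalk.one_sub_pow_le_rpow_neg hn₂ ht.le measureReal_le_one hRt
      (by exact_mod_cast hm ▸ Nat.le_ceil R)

/-- For a random walk with i.i.d. `ℕ`-valued steps whose tail is
`P(ξ > n) = n^{-β} L(n)`, `0 < β < 1`, started at `0`, with range `A = {S_n : n ≥ 0}`:
for every `C > 0` there is `c > 0` so that for all `n ≥ 1`,
`P(#(A ∩ [0,n]) ≥ c n^β log n / L(n)) ≤ n^{-C}`. -/
theorem stmt12 {Ω : Type*} [MeasurableSpace Ω] (P : Measure Ω) [IsProbabilityMeasure P]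
    (β : ℝ) (hβ1 : 0 < β) (hβ2 : β < 1)
    (ξ : ℕ → Ω → ℕ) (Lf : ℝ → ℝ) (hL : SlowlyVarying Lf)
    (hmeas : ∀ k, Measurable (ξ k))
    (hindep : iIndepFun ξ P)
    (hident : ∀ k, IdentDistrib (ξ k) (ξ 0) P P)
    (htail : ∀ n : ℕ, 1 ≤ n →
      (P {ω | n < ξ 0 ω}).toReal = (n : ℝ) ^ (-β) * Lf n)
    (S : Ω → ℕ → ℕ) (hS : ∀ ω n, S ω n = ∑ k ∈ Finset.range n, ξ k ω) :
    ∀ C > (0:ℝ), ∃ c > (0:ℝ), ∀ n : ℕ, 1 ≤ n →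
      (P {ω | c * (n : ℝ) ^ β * Real.log n / Lf n ≤
          ((Set.range (S ω) ∩ Set.Iic n).ncard : ℝ)}).toReal ≤ (n : ℝ) ^ (-C) :=
  stmt12_general P β ξ Lf hL hmeas hindep hident htail S hS
end

section
/- Under the same random walk assumptions (steps with regularly varying tail of index −β ∈ (−1,0), S_0 = 0, range A), almost surely: limsup over n_0 → ∞ of sup_{n > n_0} max_{0 ≤ k ≤ n−1} max_{m ∈ ℤ} #(A ∩ [m, m+2^k) ∩ [2^{n_0}, 2^n)) / (n 2^{βk}/L(2^k)) is finite. That is, uniformly over dyadic windows at all scales, the range occupies at most of order n 2^{βk}/L(2^k) points in any interval of length 2^k inside [2^{n_0}, 2^n). -/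
open Filter MeasureTheory ProbabilityTheory

/-!
Let `q_k = P(ξ > 2^k)`. Whenever a positive step lands the walk on a point `v`, the next `r`
positive steps are i.i.d. with the law of `ξ` given `ξ > 0`, so they all stay in `(v, v + 2^k]`
with probability at most `(1 - q_k)^r`. A positive step lands on a given point at most once, so
the expected number of landings below `2^n` is at most `2^n`. With `r = n ⌈3 / q_k⌉` the
probability that some window of length `2^k` below `2^n` (`k < n`) holds more than `r` points of
the range is therefore at most `n 2^n 8^{-n}`, which is summable; by Borel–Cantelli, almost surely
for all large `n` every such window holds at most `n ⌈3 / q_k⌉ ≤ 4 n / q_k` points, and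
`q_k = 2^{-βk} L(2^k)`.
-/

open scoped ENNReal

lemma ENNReal.inv_mul_tsub_le {p q : ℝ≥0∞} (hp : p ≤ 1) : p⁻¹ * (p - q) ≤ 1 - q := by
  rcases eq_or_ne p 0 with rfl | hp0
  · simp
  have hp_top : p ≠ ∞ := ne_top_of_le_ne_top ENNReal.one_ne_top hp
  calc p⁻¹ * (p - q) ≤ p⁻¹ * (p * (1 - q)) := by
        gcongr
        rw [ENNReal.mul_sub fun _ _ => hp_top, mul_one]
        exact tsub_le_tsub_left (mul_le_of_le_one_left' hp) p
    _ = 1 - q := by rw [← mul_assoc, ENNReal.inv_mul_cancel hp0 hp_top, one_mul]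

lemma one_sub_pow_ceil_three_div_le {q : ℝ≥0∞} (hq0 : q ≠ 0) (hq1 : q ≤ 1) :
    (1 - q) ^ ⌈3 / q.toReal⌉₊ ≤ 8⁻¹ := by
  have hq_top : q ≠ ∞ := ne_top_of_le_ne_top ENNReal.one_ne_top hq1
  have hqr : 0 < q.toReal := ENNReal.toReal_pos hq0 hq_top
  have hqr1 : q.toReal ≤ 1 := ENNReal.toReal_le_of_le_ofReal zero_le_one (by simpa using hq1)
  set m := ⌈3 / q.toReal⌉₊
  have hm : 3 ≤ m * q.toReal := (div_le_iff₀ hqr).mp (Nat.le_ceil _)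
  have hexp : 8 ≤ Real.exp 1 ^ 3 := by
    have := Real.add_one_le_exp 1
    calc (8 : ℝ) = 2 ^ 3 := by norm_num
      _ ≤ Real.exp 1 ^ 3 := by gcongr; linarith
  have hreal : (1 - q.toReal) ^ m ≤ 8⁻¹ :=
    calc (1 - q.toReal) ^ m ≤ Real.exp (-q.toReal) ^ m := by
          gcongr
          all_goals linarith [Real.add_one_le_exp (-q.toReal)]
      _ = Real.exp (-(m * q.toReal)) := by rw [← Real.exp_nat_mul]; ring_nf
      _ ≤ Real.exp (-3) := by gcongr
      _ = (Real.exp 1 ^ 3)⁻¹ := by rw [← Real.exp_nat_mul, Real.exp_neg]; norm_num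
      _ ≤ 8⁻¹ := by gcongr
  calc (1 - q) ^ m = ENNReal.ofReal ((1 - q.toReal) ^ m) := by
        rw [ENNReal.ofReal_pow (by linarith), ENNReal.ofReal_sub _ hqr.le, ENNReal.ofReal_one,
          ENNReal.ofReal_toReal hq_top]
    _ ≤ ENNReal.ofReal 8⁻¹ := ENNReal.ofReal_le_ofReal hreal
    _ = 8⁻¹ := by rw [ENNReal.ofReal_inv_of_pos (by norm_num)]; norm_num

lemma natCast_ceil_three_div_le {q : ℝ} (hq0 : 0 < q) (hq1 : q ≤ 1) :
    (⌈3 / q⌉₊ : ℝ) ≤ 4 / q := by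
  have := Nat.ceil_lt_add_one (div_nonneg zero_le_three hq0.le)
  have : 1 ≤ 1 / q := by rw [le_div_iff₀ hq0]; linarith
  calc (⌈3 / q⌉₊ : ℝ) ≤ 3 / q + 1 / q := by linarith
    _ = 4 / q := by ring

lemma ENNReal.natCast_mul_two_pow_mul_inv_eight_pow_le (n : ℕ) :
    (n : ℝ≥0∞) * (2 ^ n * 8⁻¹ ^ n) ≤ 2⁻¹ ^ n := by
  have hn : (n : ℝ≥0∞) ≤ 2 ^ n := by exact_mod_cast Nat.lt_two_pow_self.le
  calc (n : ℝ≥0∞) * (2 ^ n * 8⁻¹ ^ n) ≤ 2 ^ n * (2 ^ n * 8⁻¹ ^ n) := by gcongr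
    _ = (2 * 2 * 8⁻¹) ^ n := by rw [mul_pow, mul_pow, mul_assoc]
    _ = 2⁻¹ ^ n := by
        rw [show (8 : ℝ≥0∞) = 2 * 2 * 2 by norm_num, ENNReal.mul_inv (by simp) (.inr two_ne_zero),
          ← mul_assoc, ENNReal.mul_inv_cancel (by simp) (ENNReal.mul_ne_top (by simp) (by simp)),
          one_mul]

lemma two_pow_rpow_neg (β : ℝ) (k : ℕ) : ((2 : ℝ) ^ k) ^ (-β) = ((2 : ℝ) ^ (β * k))⁻¹ := by
  rw [← Real.rpow_natCast, ← Real.rpow_mul zero_le_two, mul_neg, Real.rpow_neg zero_le_two,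
    mul_comm]

lemma sum_measure_preimage_Ioc {Ω : Type*} [MeasurableSpace Ω] {μ : Measure Ω} [IsFiniteMeasure μ]
    {X : Ω → ℕ} (hX : Measurable X) {a b : ℕ} (hab : a ≤ b) :
    ∑ v ∈ Finset.Ioc a b, μ (X ⁻¹' {v}) = μ (X ⁻¹' Set.Ioi a) - μ (X ⁻¹' Set.Ioi b) := by
  rw [sum_measure_preimage_singleton _ fun v _ => hX (measurableSet_singleton v),
    Finset.coe_Ioc, ← Set.Ioi_sdiff_Ioi, Set.preimage_sdiff,
    measure_sdiff (Set.preimage_mono (Set.Ioi_subset_Ioi hab))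
      (hX measurableSet_Ioi).nullMeasurableSet (measure_ne_top μ _)]

lemma measure_tail_ne_zero {Ω : Type*} [MeasurableSpace Ω] {P : Measure Ω} {X : Ω → ℕ} {β : ℝ}
    {Lf : ℝ → ℝ} (hLpos : ∀ᶠ x in atTop, 0 < Lf x)
    (htail : ∀ n : ℕ, 1 ≤ n → (P {ω | n < X ω}).toReal = (n : ℝ) ^ (-β) * Lf n) (b : ℕ) :
    P {ω | b < X ω} ≠ 0 := by
  obtain ⟨n, hLn, hbn⟩ :=
    ((tendsto_natCast_atTop_atTop.eventually hLpos).and (eventually_ge_atTop (b + 1))).exists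
  have hpos : 0 < (P {ω | n < X ω}).toReal := by
    rw [htail n (by omega)]
    exact mul_pos (Real.rpow_pos_of_pos (by exact_mod_cast (by omega : 0 < n)) _) hLn
  refine ne_bot_of_le_ne_bot (ENNReal.toReal_ne_zero.mp hpos.ne').1 (measure_mono ?_)
  exact fun ω (hω : n < X ω) => (by omega : b < X ω)

namespace RandomWalkRange

variable {Ω : Type*} {ξ : ℕ → Ω → ℕ}

def walk (ξ : ℕ → Ω → ℕ) (ω : Ω) (t : ℕ) : ℕ := ∑ i ∈ Finset.range t, ξ i ω

lemma walk_succ (ω : Ω) (t : ℕ) : walk ξ ω (t + 1) = walk ξ ω t + ξ t ω :=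
  Finset.sum_range_succ _ t

lemma walk_mono (ω : Ω) : Monotone (walk ξ ω) := fun _ _ h =>
  Finset.sum_le_sum_of_subset (Finset.range_subset_range.mpr h)

lemma walk_succ_lt_of_lt {ω : Ω} {t t' : ℕ} (htt' : t < t') (hpos : 0 < ξ t' ω) :
    walk ξ ω (t + 1) < walk ξ ω (t' + 1) := by
  have := walk_mono (ξ := ξ) ω (show t + 1 ≤ t' from htt')
  rw [walk_succ ω t']
  omega

lemma walk_add_eq_of_zeros {ω : Ω} {t d : ℕ} (hzero : ∀ i < d, ξ (t + i) ω = 0) :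
    walk ξ ω (t + d) = walk ξ ω t := by
  induction d with
  | zero => rfl
  | succ d ih =>
    rw [← add_assoc, walk_succ, ih fun i hi => hzero i (by omega), hzero d (by omega), add_zero]

lemma exists_pos_step_of_lt_walk {ω : Ω} {t j : ℕ} (h : walk ξ ω t < walk ξ ω j) :
    ∃ d, 0 < ξ (t + d) ω := by
  by_contra! hzero
  have := walk_mono (ξ := ξ) ω (Nat.le_add_left j t)
  rw [walk_add_eq_of_zeros fun i _ => Nat.le_zero.mp (hzero i)] at this
  omega

lemma exists_landing_eq {ω : Ω} {x : ℕ} (hx : x ∈ Set.range (walk ξ ω)) (hx0 : 0 < x) :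
    ∃ t, 0 < ξ t ω ∧ walk ξ ω (t + 1) = x := by
  classical
  have hex : ∃ j, walk ξ ω j = x := hx
  obtain ⟨t, ht⟩ : ∃ t, Nat.find hex = t + 1 := by
    refine Nat.exists_eq_add_one_of_ne_zero fun h => ?_
    have := Nat.find_spec hex
    rw [h] at this
    exact hx0.ne (by simpa [walk] using this)
  have hland : walk ξ ω (t + 1) = x := ht ▸ Nat.find_spec hex
  have hbefore : walk ξ ω t ≠ x := Nat.find_min hex (by omega)
  refine ⟨t, ?_, hland⟩
  rw [walk_succ] at hland
  omega

/-- After time `t` the walk makes at least `r` positive steps, and the first `r` of them sum to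
at most `b`: `d` is the number of zero steps before the next positive one, `v` its size. -/
def posStepsWithin (ξ : ℕ → Ω → ℕ) : ℕ → ℕ → ℕ → Set Ω
  | 0, _, _ => Set.univ
  | r + 1, t, b => ⋃ (d : ℕ) (v ∈ Finset.Ioc 0 b),
      (⋂ i < d, ξ (t + i) ⁻¹' {0}) ∩ ξ (t + d) ⁻¹' {v} ∩ posStepsWithin ξ r (t + d + 1) (b - v)

lemma mem_posStepsWithin_of_card_le {ω : Ω} {r t b : ℕ} {V : Finset ℕ} (hr : r ≤ V.card)
    (hV : ∀ x ∈ V, x ∈ Set.range (walk ξ ω) ∧ walk ξ ω t < x ∧ x ≤ walk ξ ω t + b) :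
    ω ∈ posStepsWithin ξ r t b := by
  classical
  induction r generalizing t b V with
  | zero => trivial
  | succ r ih =>
    have hne : V.Nonempty := Finset.card_pos.mp (by omega)
    obtain ⟨⟨j, hj⟩, hlt, hle⟩ := hV _ (V.min'_mem hne)
    have hex := exists_pos_step_of_lt_walk (hj ▸ hlt)
    set d := Nat.find hex
    have hzero : ∀ i < d, ξ (t + i) ω = 0 := fun i hi =>
      Nat.eq_zero_of_not_pos (Nat.find_min hex hi)
    have hwalk_d : walk ξ ω (t + d + 1) = walk ξ ω t + ξ (t + d) ω := by
      rw [walk_succ, walk_add_eq_of_zeros hzero]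
    have hland : walk ξ ω (t + d + 1) ≤ V.min' hne := by
      refine hj ▸ walk_mono ω (not_lt.mp fun hj' => ?_)
      have := walk_mono (ξ := ξ) ω (Nat.le_of_lt_succ hj')
      rw [walk_add_eq_of_zeros hzero] at this
      omega
    have hstep : ξ (t + d) ω ∈ Finset.Ioc 0 b := Finset.mem_Ioc.mpr ⟨Nat.find_spec hex, by omega⟩
    have hrest : ω ∈ posStepsWithin ξ r (t + d + 1) (b - ξ (t + d) ω) := by
      refine ih (V := V.filter (walk ξ ω (t + d + 1) < ·)) ?_ fun x hx => ?_
      · have hsub : V.erase (V.min' hne) ⊆ V.filter (walk ξ ω (t + d + 1) < ·) := fun x hx =>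
          Finset.mem_filter.mpr ⟨Finset.mem_of_mem_erase hx,
            hland.trans_lt (lt_of_le_of_ne (V.min'_le x (Finset.mem_of_mem_erase hx))
              (Finset.ne_of_mem_erase hx).symm)⟩
        have := Finset.card_le_card hsub
        rw [Finset.card_erase_of_mem (V.min'_mem hne)] at this
        omega
      · obtain ⟨hxV, hx⟩ := Finset.mem_filter.mp hx
        obtain ⟨hrange, -, hxb⟩ := hV x hxV
        exact ⟨hrange, hx, by omega⟩
    simp only [posStepsWithin, Set.mem_iUnion]
    exact ⟨d, _, hstep, ⟨Set.mem_iInter₂.mpr hzero, rfl⟩, hrest⟩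

def crowdedLanding (ξ : ℕ → Ω → ℕ) (N r b : ℕ) : Set Ω :=
  ⋃ t, {ω | 0 < ξ t ω ∧ walk ξ ω (t + 1) < N} ∩ posStepsWithin ξ r (t + 1) b

lemma ncard_le_of_notMem_crowdedLanding {ω : Ω} {N r b : ℕ} {X : Set ℕ}
    (hX : ∀ x ∈ X, x ∈ Set.range (walk ξ ω) ∧ 0 < x ∧ x < N)
    (hwidth : ∀ x ∈ X, ∀ y ∈ X, x ≤ y + b) (hω : ω ∉ crowdedLanding ξ N r b) :
    X.ncard ≤ r := by
  have hfin : X.Finite := (Set.finite_Iio N).subset fun x hx => (hX x hx).2.2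
  by_contra! hcard
  set V := hfin.toFinset
  have hne : V.Nonempty := Finset.card_pos.mp (by rw [← Set.ncard_eq_toFinset_card X hfin]; omega)
  have hmin : V.min' hne ∈ X := hfin.mem_toFinset.mp (V.min'_mem hne)
  obtain ⟨hrange, hpos, hN⟩ := hX _ hmin
  obtain ⟨t, ht, hland⟩ := exists_landing_eq hrange hpos
  refine hω (Set.mem_iUnion.mpr ⟨t, ⟨ht, hland ▸ hN⟩, mem_posStepsWithin_of_card_le
    (V := V.erase (V.min' hne)) ?_ fun x hx => ?_⟩)
  · rw [Finset.card_erase_of_mem (V.min'_mem hne), ← Set.ncard_eq_toFinset_card X hfin]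
    omega
  · have hxX : x ∈ X := hfin.mem_toFinset.mp (Finset.mem_of_mem_erase hx)
    refine ⟨(hX x hxX).1, hland ▸ ?_, hland ▸ hwidth x hxX _ hmin⟩
    exact lt_of_le_of_ne (V.min'_le x (Finset.mem_of_mem_erase hx)) (Finset.ne_of_mem_erase hx).symm

abbrev stepsBefore (ξ : ℕ → Ω → ℕ) (T : ℕ) : MeasurableSpace Ω :=
  ⨆ i ∈ Set.Iio T, MeasurableSpace.comap (ξ i) inferInstance

abbrev stepsFrom (ξ : ℕ → Ω → ℕ) (T : ℕ) : MeasurableSpace Ω :=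
  ⨆ i ∈ Set.Ici T, MeasurableSpace.comap (ξ i) inferInstance

lemma measurable_stepsBefore {j T : ℕ} (h : j < T) : Measurable[stepsBefore ξ T] (ξ j) :=
  (comap_measurable (ξ j)).mono
    (le_iSup₂ (f := fun i (_ : i ∈ Set.Iio T) => MeasurableSpace.comap (ξ i) inferInstance) j h)
    le_rfl

lemma measurable_stepsFrom {j T : ℕ} (h : T ≤ j) : Measurable[stepsFrom ξ T] (ξ j) :=
  (comap_measurable (ξ j)).mono
    (le_iSup₂ (f := fun i (_ : i ∈ Set.Ici T) => MeasurableSpace.comap (ξ i) inferInstance) j h)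
    le_rfl

lemma stepsFrom_antitone : Antitone (stepsFrom ξ) := fun _ _ h =>
  biSup_mono fun _ hi => le_trans h hi

lemma measurable_walk_stepsBefore (T : ℕ) : Measurable[stepsBefore ξ T] (walk ξ · T) :=
  Finset.measurable_sum _ fun _ hi => measurable_stepsBefore (Finset.mem_range.mp hi)

lemma measurableSet_zeros {t d T : ℕ} (h : t + d ≤ T) :
    MeasurableSet[stepsBefore ξ T] (⋂ i < d, ξ (t + i) ⁻¹' {0}) :=
  .iInter fun _ => .iInter fun _ => measurable_stepsBefore (by omega) (measurableSet_singleton 0)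

lemma measurableSet_zeros_inter_step {t d v T : ℕ} (h : t + d < T) :
    MeasurableSet[stepsBefore ξ T] ((⋂ i < d, ξ (t + i) ⁻¹' {0}) ∩ ξ (t + d) ⁻¹' {v}) :=
  (measurableSet_zeros h.le).inter (measurable_stepsBefore h (measurableSet_singleton v))

lemma measurableSet_posStepsWithin (r t b : ℕ) :
    MeasurableSet[stepsFrom ξ t] (posStepsWithin ξ r t b) := by
  induction r generalizing t b with
  | zero => exact .univ
  | succ r ih =>
    refine .iUnion fun d => .biUnion (Finset.countable_toSet _) fun v _ => .inter (.inter ?_ ?_) ?_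
    · exact .iInter fun _ => .iInter fun _ =>
        measurable_stepsFrom (by omega) (measurableSet_singleton 0)
    · exact measurable_stepsFrom (by omega) (measurableSet_singleton v)
    · exact stepsFrom_antitone (by omega) _ (ih _ _)

variable [MeasurableSpace Ω] {P : Measure Ω}

lemma measure_inter_eq_mul_of_stepsBefore_stepsFrom (hmeas : ∀ k, Measurable (ξ k))
    (hindep : iIndepFun ξ P) (T : ℕ) {A B : Set Ω}
    (hA : MeasurableSet[stepsBefore ξ T] A) (hB : MeasurableSet[stepsFrom ξ T] B) :
    P (A ∩ B) = P A * P B :=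
  (Indep_iff _ _ _).mp (indep_iSup_of_disjoint (fun i => (hmeas i).comap_le)
    ((iIndepFun_iff_iIndep _ _ _).mp hindep) (Set.Iio_disjoint_Ici le_rfl)) A B hA hB

lemma measure_zeros_inter_step (hmeas : ∀ k, Measurable (ξ k)) (hindep : iIndepFun ξ P)
    (hident : ∀ k, IdentDistrib (ξ k) (ξ 0) P P) (t d v : ℕ) :
    P ((⋂ i < d, ξ (t + i) ⁻¹' {0}) ∩ ξ (t + d) ⁻¹' {v}) =
      P (⋂ i < d, ξ (t + i) ⁻¹' {0}) * P (ξ 0 ⁻¹' {v}) := by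
  rw [measure_inter_eq_mul_of_stepsBefore_stepsFrom hmeas hindep (t + d)
      (measurableSet_zeros le_rfl) (measurable_stepsFrom le_rfl (measurableSet_singleton v)),
    (hident _).measure_mem_eq (measurableSet_singleton v)]

variable [IsProbabilityMeasure P]

lemma measure_zeros (hmeas : ∀ k, Measurable (ξ k)) (hindep : iIndepFun ξ P)
    (hident : ∀ k, IdentDistrib (ξ k) (ξ 0) P P) (t d : ℕ) :
    P (⋂ i < d, ξ (t + i) ⁻¹' {0}) = P (ξ 0 ⁻¹' {0}) ^ d := by
  induction d with
  | zero => simp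
  | succ d ih =>
    rw [Set.biInter_lt_succ, measure_zeros_inter_step hmeas hindep hident, ih, pow_succ]

lemma measure_posStepsWithin_le (hmeas : ∀ k, Measurable (ξ k)) (hindep : iIndepFun ξ P)
    (hident : ∀ k, IdentDistrib (ξ k) (ξ 0) P P) (r t b : ℕ) :
    P (posStepsWithin ξ r t b) ≤ (1 - P (ξ 0 ⁻¹' Set.Ioi b)) ^ r := by
  induction r generalizing t b with
  | zero => simpa using prob_le_one
  | succ r ih =>
    set p := P (ξ 0 ⁻¹' Set.Ioi 0)
    set q := P (ξ 0 ⁻¹' Set.Ioi b)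
    have hzero : P (ξ 0 ⁻¹' {0}) = 1 - p := by
      rw [← prob_compl_eq_one_sub (hmeas 0 measurableSet_Ioi)]
      congr 1
      ext
      simp
    have hterm : ∀ d, ∀ v ∈ Finset.Ioc 0 b,
        P ((⋂ i < d, ξ (t + i) ⁻¹' {0}) ∩ ξ (t + d) ⁻¹' {v} ∩
            posStepsWithin ξ r (t + d + 1) (b - v))
          ≤ (1 - p) ^ d * P (ξ 0 ⁻¹' {v}) * (1 - q) ^ r := by
      intro d v _
      rw [measure_inter_eq_mul_of_stepsBefore_stepsFrom hmeas hindep (t + d + 1)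
          (measurableSet_zeros_inter_step (by omega)) (measurableSet_posStepsWithin _ _ _),
        measure_zeros_inter_step hmeas hindep hident, measure_zeros hmeas hindep hident, hzero]
      gcongr
      refine (ih _ _).trans (pow_le_pow_left' (tsub_le_tsub_left (measure_mono ?_) 1) r)
      exact Set.preimage_mono (Set.Ioi_subset_Ioi tsub_le_self)
    calc P (posStepsWithin ξ (r + 1) t b)
        ≤ ∑' d, ∑ v ∈ Finset.Ioc 0 b, (1 - p) ^ d * P (ξ 0 ⁻¹' {v}) * (1 - q) ^ r :=
          (measure_iUnion_le _).trans <| ENNReal.tsum_le_tsum fun d =>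
            (measure_biUnion_finset_le _ _).trans (Finset.sum_le_sum (hterm d))
      _ = p⁻¹ * (p - q) * (1 - q) ^ r := by
          simp_rw [← Finset.sum_mul, ← Finset.mul_sum]
          rw [sum_measure_preimage_Ioc (hmeas 0) (Nat.zero_le b), ENNReal.tsum_mul_right,
            ENNReal.tsum_mul_right, ENNReal.tsum_geometric,
            ENNReal.sub_sub_cancel ENNReal.one_ne_top prob_le_one]
      _ ≤ (1 - q) ^ (r + 1) := by
          rw [pow_succ']
          gcongr
          exact ENNReal.inv_mul_tsub_le prob_le_one

lemma tsum_measure_landing_le (hmeas : ∀ k, Measurable (ξ k)) (N : ℕ) :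
    ∑' t, P {ω | 0 < ξ t ω ∧ walk ξ ω (t + 1) < N} ≤ N := by
  have hwalk : ∀ t, Measurable (walk ξ · t) := fun t =>
    Finset.measurable_sum _ fun i _ => hmeas i
  let landsAt (t x : ℕ) : Set Ω := {ω | 0 < ξ t ω ∧ walk ξ ω (t + 1) = x}
  have hdisj : ∀ x, Pairwise (Function.onFun Disjoint fun t => landsAt t x) := by
    intro x t t' hne
    refine Set.disjoint_left.mpr fun ω ⟨ht, hx⟩ ⟨ht', hx'⟩ => ?_
    rcases hne.lt_or_gt with h | h
    · exact (walk_succ_lt_of_lt h ht').ne (hx.trans hx'.symm)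
    · exact (walk_succ_lt_of_lt h ht).ne (hx'.trans hx.symm)
  calc ∑' t, P {ω | 0 < ξ t ω ∧ walk ξ ω (t + 1) < N}
      ≤ ∑' t, ∑ x ∈ Finset.range N, P (landsAt t x) := by
        refine ENNReal.tsum_le_tsum fun t => (measure_mono ?_).trans (measure_biUnion_finset_le _ _)
        intro ω ⟨hpos, hlt⟩
        exact Set.mem_biUnion (Finset.mem_range.mpr hlt) ⟨hpos, rfl⟩
    _ = ∑ x ∈ Finset.range N, ∑' t, P (landsAt t x) :=
        Summable.tsum_finsetSum fun _ _ => ENNReal.summable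
    _ ≤ ∑ _x ∈ Finset.range N, 1 := by
        refine Finset.sum_le_sum fun x _ => (tsum_measure_le_measure_univ (fun t => ?_)
          fun t t' h => (hdisj x h).aedisjoint).trans prob_le_one
        exact ((hmeas t measurableSet_Ioi).inter
          (hwalk (t + 1) (measurableSet_singleton x))).nullMeasurableSet
    _ = N := by simp

lemma measure_crowdedLanding_le (hmeas : ∀ k, Measurable (ξ k)) (hindep : iIndepFun ξ P)
    (hident : ∀ k, IdentDistrib (ξ k) (ξ 0) P P) (N r b : ℕ) :
    P (crowdedLanding ξ N r b) ≤ N * (1 - P (ξ 0 ⁻¹' Set.Ioi b)) ^ r := by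
  calc P (crowdedLanding ξ N r b)
      ≤ ∑' t, P {ω | 0 < ξ t ω ∧ walk ξ ω (t + 1) < N} * P (posStepsWithin ξ r (t + 1) b) := by
        refine (measure_iUnion_le _).trans (le_of_eq (tsum_congr fun t => ?_))
        refine measure_inter_eq_mul_of_stepsBefore_stepsFrom hmeas hindep (t + 1) ?_
          (measurableSet_posStepsWithin _ _ _)
        exact (measurable_stepsBefore (lt_add_one t) measurableSet_Ioi).inter
          (measurable_walk_stepsBefore (t + 1) measurableSet_Iio)
    _ ≤ ∑' t, P {ω | 0 < ξ t ω ∧ walk ξ ω (t + 1) < N} * (1 - P (ξ 0 ⁻¹' Set.Ioi b)) ^ r := by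
        gcongr with t
        exact measure_posStepsWithin_le hmeas hindep hident r (t + 1) b
    _ ≤ N * (1 - P (ξ 0 ⁻¹' Set.Ioi b)) ^ r := by
        rw [ENNReal.tsum_mul_right]
        gcongr
        exact tsum_measure_landing_le hmeas N

lemma ae_eventually_notMem_crowdedLanding (hmeas : ∀ k, Measurable (ξ k))
    (hindep : iIndepFun ξ P) (hident : ∀ k, IdentDistrib (ξ k) (ξ 0) P P) (m : ℕ → ℕ)
    (hm : ∀ k, (1 - P (ξ 0 ⁻¹' Set.Ioi (2 ^ k))) ^ m k ≤ 8⁻¹) :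
    ∀ᵐ ω ∂P, ∀ᶠ n in atTop, ω ∉ ⋃ k < n, crowdedLanding ξ (2 ^ n) (n * m k) (2 ^ k) := by
  refine ae_eventually_notMem (ne_top_of_le_ne_top (b := ∑' n : ℕ, (2⁻¹ : ℝ≥0∞) ^ n) ?_
    (ENNReal.tsum_le_tsum fun n => ?_))
  · exact (ENNReal.tsum_geometric _).trans_ne (ENNReal.inv_ne_top.mpr (by norm_num))
  calc P (⋃ k < n, crowdedLanding ξ (2 ^ n) (n * m k) (2 ^ k))
      ≤ ∑ k ∈ Finset.range n, P (crowdedLanding ξ (2 ^ n) (n * m k) (2 ^ k)) := by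
        simpa only [← Finset.mem_range] using measure_biUnion_finset_le (Finset.range n) _
    _ ≤ ∑ _k ∈ Finset.range n, 2 ^ n * 8⁻¹ ^ n := by
        refine Finset.sum_le_sum fun k _ =>
          (measure_crowdedLanding_le hmeas hindep hident _ _ _).trans ?_
        rw [pow_mul', Nat.cast_pow, Nat.cast_ofNat]
        gcongr
        exact hm k
    _ ≤ 2⁻¹ ^ n := by
        rw [Finset.sum_const, Finset.card_range, nsmul_eq_mul]
        exact ENNReal.natCast_mul_two_pow_mul_inv_eight_pow_le n

end RandomWalkRange

open RandomWalkRange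

theorem stmt13_general {Ω : Type*} [MeasurableSpace Ω] (P : Measure Ω) [IsProbabilityMeasure P]
    (β : ℝ)
    (ξ : ℕ → Ω → ℕ) (Lf : ℝ → ℝ) (hL : SlowlyVarying Lf)
    (hmeas : ∀ k, Measurable (ξ k))
    (hindep : iIndepFun ξ P)
    (hident : ∀ k, IdentDistrib (ξ k) (ξ 0) P P)
    (htail : ∀ n : ℕ, 1 ≤ n →
      (P {ω | n < ξ 0 ω}).toReal = (n : ℝ) ^ (-β) * Lf n)
    (S : Ω → ℕ → ℕ) (hS : ∀ ω n, S ω n = ∑ k ∈ Finset.range n, ξ k ω) :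
    ∀ᵐ ω ∂P, ∃ C : ℝ, ∃ n₀ : ℕ, ∀ n : ℕ, n₀ < n → ∀ k : ℕ, k < n → ∀ m : ℤ,
      (({x : ℕ | x ∈ Set.range (S ω) ∧ m ≤ (x : ℤ) ∧ (x : ℤ) < m + 2 ^ k ∧
          2 ^ n₀ ≤ x ∧ x < 2 ^ n}).ncard : ℝ) ≤
        C * n * (2 : ℝ) ^ (β * k) / Lf ((2 : ℝ) ^ k) := by
  set q : ℕ → ℝ≥0∞ := fun k => P {ω | 2 ^ k < ξ 0 ω}
  have hq : ∀ k, q k ≠ 0 := fun k => measure_tail_ne_zero hL.1 htail (2 ^ k)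
  have hq_real : ∀ k, 0 < (q k).toReal := fun k => ENNReal.toReal_pos (hq k) (measure_ne_top P _)
  have hq_le : ∀ k, (q k).toReal ≤ 1 := fun k =>
    ENNReal.toReal_le_of_le_ofReal zero_le_one (by simpa using prob_le_one)
  have hSω : ∀ ω, S ω = walk ξ ω := fun ω => funext (hS ω)
  filter_upwards [ae_eventually_notMem_crowdedLanding hmeas hindep hident
    (fun k => ⌈3 / (q k).toReal⌉₊) fun k => one_sub_pow_ceil_three_div_le (hq k) prob_le_one]
    with ω hω
  obtain ⟨n₀, hn₀⟩ := eventually_atTop.mp hω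
  refine ⟨4, n₀, fun n hn k hk m => ?_⟩
  have hcount := ncard_le_of_notMem_crowdedLanding (ω := ω) (b := 2 ^ k)
    (X := {x : ℕ | x ∈ Set.range (S ω) ∧ m ≤ (x : ℤ) ∧ (x : ℤ) < m + 2 ^ k ∧
      2 ^ n₀ ≤ x ∧ x < 2 ^ n})
    (fun x ⟨hx, _, _, hx₀, hxn⟩ => ⟨hSω ω ▸ hx, Nat.one_le_two_pow.trans hx₀, hxn⟩)
    (fun x ⟨_, _, hx, _⟩ y ⟨_, hy, _⟩ => by zify; omega)
    fun h => hn₀ n hn.le (Set.mem_biUnion hk h)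
  have hq_eq : (q k).toReal = ((2 : ℝ) ^ (β * k))⁻¹ * Lf ((2 : ℝ) ^ k) := by
    simpa [two_pow_rpow_neg] using htail (2 ^ k) Nat.one_le_two_pow
  calc _ ≤ (n : ℝ) * ⌈3 / (q k).toReal⌉₊ := by exact_mod_cast hcount
    _ ≤ n * (4 / (q k).toReal) := by
        gcongr
        exact natCast_ceil_three_div_le (hq_real k) (hq_le k)
    _ = 4 * n * (2 : ℝ) ^ (β * k) / Lf ((2 : ℝ) ^ k) := by
        rw [hq_eq]; field_simp

/-- For the same random walk (i.i.d. `ℕ`-valued steps with regularly varying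
tail of index `-β`, `S₀ = 0`, range `A`), almost surely there are `C` and `n₀` such that for
all `n > n₀`, all scales `k < n` and all windows `[m, m + 2^k)`,
`#(A ∩ [m, m+2^k) ∩ [2^{n₀}, 2^n)) ≤ C n 2^{βk} / L(2^k)`; i.e. the limsup over `n₀ → ∞`
of the normalized dyadic-window occupation counts is a.s. finite. -/
theorem stmt13 {Ω : Type*} [MeasurableSpace Ω] (P : Measure Ω) [IsProbabilityMeasure P]
    (β : ℝ) (hβ1 : 0 < β) (hβ2 : β < 1)
    (ξ : ℕ → Ω → ℕ) (Lf : ℝ → ℝ) (hL : SlowlyVarying Lf)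
    (hmeas : ∀ k, Measurable (ξ k))
    (hindep : iIndepFun ξ P)
    (hident : ∀ k, IdentDistrib (ξ k) (ξ 0) P P)
    (htail : ∀ n : ℕ, 1 ≤ n →
      (P {ω | n < ξ 0 ω}).toReal = (n : ℝ) ^ (-β) * Lf n)
    (S : Ω → ℕ → ℕ) (hS : ∀ ω n, S ω n = ∑ k ∈ Finset.range n, ξ k ω) :
    ∀ᵐ ω ∂P, ∃ C : ℝ, ∃ n₀ : ℕ, ∀ n : ℕ, n₀ < n → ∀ k : ℕ, k < n → ∀ m : ℤ,
      (({x : ℕ | x ∈ Set.range (S ω) ∧ m ≤ (x : ℤ) ∧ (x : ℤ) < m + 2 ^ k ∧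
          2 ^ n₀ ≤ x ∧ x < 2 ^ n}).ncard : ℝ) ≤
        C * n * (2 : ℝ) ^ (β * k) / Lf ((2 : ℝ) ^ k) :=
  stmt13_general P β ξ Lf hL hmeas hindep hident htail S hS
end

section
/- Let ξ_1, ξ_2, … be i.i.d. with distribution equal to H_# restricted (and normalized) to (x_0, x_n), where \overline{H_\#}(z) = exp(−q(z)) with q increasing, concave in the sense that each coordinate map of H_n(z_1,…,z_m) = Σ q(z_i) is concave. Then for any m and threshold x̃ with m x_0 < x̃, inf{Σ_{i=1}^m q(z_i) : Σ_{i=1}^m z_i > x̃, x_0 < z_i < x_n} ≥ k·q(x_n), where k = ⌈(x̃ − x_n − (m−1)x_0)/(x_n − x_0)⌉_+; in particular if m ≤ (x̃ − x_n)/(2x_0) + 1 then k ≥ (x̃ − x_n)/(2(x_n − x_0)). -/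
/-!
A nonnegative concave function on `(x₀, ∞)` lies above its chord from `(x₀, 0)` to `(xₙ, q xₙ)`,
so `q z ≥ (z - x₀)/(xₙ - x₀) · q xₙ` on `(x₀, xₙ]`. Summing over the coordinates bounds
`Σ q(zᵢ)` below by `(Σ zᵢ - m x₀)/(xₙ - x₀) · q xₙ`, and `k` is smaller than this factor as soon
as `Σ zᵢ > x̃`.
-/

open Filter Set Topology

theorem ConcaveOn.sub_div_sub_mul_le {f : ℝ → ℝ} {s : Set ℝ} (hf : ConcaveOn ℝ s f)
    {y z b : ℝ} (hy : y ∈ s) (hb : b ∈ s) (hyz : y < z) (hzb : z ≤ b) (hfy : 0 ≤ f y) :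
    (z - y) / (b - y) * f b ≤ f z := by
  have hd : 0 < b - y := by linarith
  have hcomb : ((b - z) / (b - y)) • y + ((z - y) / (b - y)) • b = z := by
    simp only [smul_eq_mul]
    field_simp
    ring
  have hconc := hf.2 hy hb (div_nonneg (by linarith) hd.le : 0 ≤ (b - z) / (b - y))
    (div_nonneg (by linarith) hd.le : 0 ≤ (z - y) / (b - y)) (by field_simp; ring)
  rw [hcomb, smul_eq_mul, smul_eq_mul] at hconc
  have : 0 ≤ (b - z) / (b - y) * f y := mul_nonneg (div_nonneg (by linarith) hd.le) hfy
  linarith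

/-- `a` is not in the domain, so this is the limit of the chord bounds from `y ↓ a`. -/
theorem ConcaveOn.sub_div_sub_mul_le_of_Ioi {f : ℝ → ℝ} {a b z : ℝ}
    (hf : ConcaveOn ℝ (Ioi a) f) (hf_nonneg : ∀ y ∈ Ioi a, 0 ≤ f y)
    (haz : a < z) (hzb : z ≤ b) :
    (z - a) / (b - a) * f b ≤ f z := by
  have hchord : Tendsto (fun y => (z - y) / (b - y) * f b) (𝓝[>] a)
      (𝓝 ((z - a) / (b - a) * f b)) :=
    ((((tendsto_const_nhds.sub tendsto_id).div (tendsto_const_nhds.sub tendsto_id)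
      (by linarith)).mul tendsto_const_nhds)).mono_left nhdsWithin_le_nhds
  refine le_of_tendsto hchord ?_
  filter_upwards [Ioo_mem_nhdsGT haz] with y hy
  exact hf.sub_div_sub_mul_le hy.1 (haz.trans_le hzb) hy.2 hzb (hf_nonneg y hy.1)

theorem max_ceil_zero_lt_add_one {a : ℝ} (ha : 0 < a + 1) :
    ((max ⌈a⌉ 0 : ℤ) : ℝ) < a + 1 := by
  rw [Int.cast_max, Int.cast_zero]
  exact max_lt (Int.ceil_lt_add_one a) ha

theorem stmt19_general (q : ℝ → ℝ) (x₀ xn xt : ℝ) (m : ℕ)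
    (hx₀ : 0 < x₀) (hxn : x₀ < xn)
    (hq_conc : ConcaveOn ℝ (Set.Ioi x₀) q)
    (hq_nonneg : ∀ z ∈ Set.Ioi x₀, 0 ≤ q z)
    (hm : (m : ℝ) * x₀ < xt)
    (k : ℤ) (hk : k = max ⌈(xt - xn - ((m : ℝ) - 1) * x₀) / (xn - x₀)⌉ 0) :
    (∀ z : Fin m → ℝ, (∀ i, x₀ < z i ∧ z i < xn) → xt < ∑ i, z i →
        (k : ℝ) * q xn ≤ ∑ i, q (z i)) ∧
      ((m : ℝ) ≤ (xt - xn) / (2 * x₀) + 1 →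
        (xt - xn) / (2 * (xn - x₀)) ≤ (k : ℝ)) := by
  have hd : 0 < xn - x₀ := by linarith
  have ha : (xt - xn - ((m : ℝ) - 1) * x₀) / (xn - x₀) + 1 = (xt - m * x₀) / (xn - x₀) := by
    field_simp; ring
  set a := (xt - xn - ((m : ℝ) - 1) * x₀) / (xn - x₀)
  have hk_lt : (k : ℝ) < (xt - m * x₀) / (xn - x₀) :=
    ha ▸ hk ▸ max_ceil_zero_lt_add_one (ha ▸ div_pos (by linarith) hd)
  refine ⟨fun z hz hsum => ?_, fun hm_le => ?_⟩
  · have hk_le : (k : ℝ) ≤ ∑ i, (z i - x₀) / (xn - x₀) := by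
      rw [← Finset.sum_div, Finset.sum_sub_distrib, Finset.sum_const, Finset.card_univ,
        Fintype.card_fin, nsmul_eq_mul]
      exact hk_lt.le.trans (by gcongr)
    calc (k : ℝ) * q xn ≤ ∑ i, (z i - x₀) / (xn - x₀) * q xn := by
          rw [← Finset.sum_mul]; gcongr; exact hq_nonneg xn hxn
      _ ≤ ∑ i, q (z i) := Finset.sum_le_sum fun i _ =>
          hq_conc.sub_div_sub_mul_le_of_Ioi hq_nonneg (hz i).1 (hz i).2.le
  · have hm_x₀ : ((m : ℝ) - 1) * x₀ ≤ (xt - xn) / 2 := by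
      have := mul_le_mul_of_nonneg_right (sub_le_sub_right hm_le 1) (by positivity : 0 ≤ 2 * x₀)
      rw [add_sub_cancel_right, div_mul_cancel₀ _ (by positivity)] at this
      linarith
    calc (xt - xn) / (2 * (xn - x₀)) ≤ a := by
          rw [← div_div]; exact div_le_div_of_nonneg_right (by linarith) hd.le
      _ ≤ ⌈a⌉ := Int.le_ceil a
      _ ≤ k := by rw [hk]; exact_mod_cast le_max_left _ _

/-- Let `q : (x₀, ∞) → ℝ₊` be increasing and concave (so each coordinate map
of `H(z₁,…,z_m) = Σ q(zᵢ)` is concave). For any `m` and threshold `x̃` with `m x₀ < x̃`,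
`inf {Σ q(zᵢ) : Σ zᵢ > x̃, x₀ < zᵢ < xₙ} ≥ k q(xₙ)`, where
`k = ⌈(x̃ - xₙ - (m-1) x₀)/(xₙ - x₀)⌉₊`; in particular if `m ≤ (x̃ - xₙ)/(2x₀) + 1`
then `k ≥ (x̃ - xₙ)/(2(xₙ - x₀))`. -/
theorem stmt19 (q : ℝ → ℝ) (x₀ xn xt : ℝ) (m : ℕ)
    (hx₀ : 0 < x₀) (hxn : x₀ < xn)
    (hq_mono : MonotoneOn q (Set.Ioi x₀))
    (hq_conc : ConcaveOn ℝ (Set.Ioi x₀) q)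
    (hq_nonneg : ∀ z ∈ Set.Ioi x₀, 0 ≤ q z)
    (hm : (m : ℝ) * x₀ < xt)
    (k : ℤ) (hk : k = max ⌈(xt - xn - ((m : ℝ) - 1) * x₀) / (xn - x₀)⌉ 0) :
    (∀ z : Fin m → ℝ, (∀ i, x₀ < z i ∧ z i < xn) → xt < ∑ i, z i →
        (k : ℝ) * q xn ≤ ∑ i, q (z i)) ∧
      ((m : ℝ) ≤ (xt - xn) / (2 * x₀) + 1 →
        (xt - xn) / (2 * (xn - x₀)) ≤ (k : ℝ)) :=
  stmt19_general q x₀ xn xt m hx₀ hxn hq_conc hq_nonneg hm k hk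
end
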